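/- arXiv:2409.01017 — 2 statements merged into one kernel-verified Lean document; each statement's English description precedes it below -/
import Mathlib

section
/- For the logistic kernel K(x) = e^{−x}/(1+e^{−x})², the convolution smoothing of the hinge function max(·,0) equals the scaled softplus function: q(x) = δ·ln(1 + e^{x/δ}) for all x ∈ ℝ and any δ > 0. -/
open MeasureTheory Real Filter Set Topology

/-- Convolution smoothing of the hinge function with the logistic kernel is the
scaled softplus function. -/
theorem logistic_kernel_smoothing (δ : ℝ) (hδ : 0 < δ) (x : ℝ) :
    (∫ v : ℝ, max v 0 *
        (δ⁻¹ * (Real.exp (-((v - x) / δ)) / (1 + Real.exp (-((v - x) / δ))) ^ 2))) =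
      δ * Real.log (1 + Real.exp (x / δ)) := by
  set f : ℝ → ℝ := fun v =>
    max v 0 * (δ⁻¹ * (Real.exp (-((v - x) / δ)) / (1 + Real.exp (-((v - x) / δ))) ^ 2)) with hf
  set F : ℝ → ℝ := fun v =>
    v * (1 + Real.exp (-((v - x) / δ)))⁻¹ - δ * Real.log (1 + Real.exp ((v - x) / δ)) with hF
  have hpos : ∀ t : ℝ, (0:ℝ) < 1 + Real.exp t := fun t => by positivity
  -- key log identity
  have hlog : ∀ t : ℝ, Real.log (1 + Real.exp t) = t + Real.log (1 + Real.exp (-t)) := by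
    intro t
    have h : (1:ℝ) + Real.exp t = Real.exp t * (1 + Real.exp (-t)) := by
      rw [mul_add, mul_one, ← Real.exp_add, add_neg_cancel, Real.exp_zero, add_comm]
    rw [h, Real.log_mul (Real.exp_ne_zero _) (hpos (-t)).ne', Real.log_exp]
  -- alternative form of F, useful for the limit at infinity
  have hF_eq : ∀ v : ℝ, F v =
      x - v * (Real.exp (-((v - x) / δ)) * (1 + Real.exp (-((v - x) / δ)))⁻¹)
        - δ * Real.log (1 + Real.exp (-((v - x) / δ))) := by
    intro v
    have h1 := hpos (-((v - x) / δ))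
    rw [hF]
    simp only
    rw [hlog ((v - x) / δ)]
    field_simp
    ring
  -- Step 1: reduce to an integral over (0, ∞)
  have h1 : (∫ v : ℝ, f v) = ∫ v in Ioi (0:ℝ), f v := by
    rw [← integral_indicator measurableSet_Ioi]
    congr 1
    funext v
    rw [Set.indicator]
    split_ifs with hv
    · rfl
    · rw [hf]
      simp only
      rw [max_eq_right (not_lt.mp (by simpa using hv)), zero_mul]
  -- Step 2: derivative of F
  have hderiv : ∀ v ∈ Ici (0:ℝ), HasDerivAt F (f v) v := by
    intro v hv
    have ht : HasDerivAt (fun v : ℝ => (v - x) / δ) δ⁻¹ v := by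
      simpa using ((hasDerivAt_id v).sub_const x).div_const δ
    have hexp : HasDerivAt (fun v : ℝ => Real.exp (-((v - x) / δ)))
        (-δ⁻¹ * Real.exp (-((v - x) / δ))) v := by
      have := (Real.hasDerivAt_exp (-((v - x) / δ))).comp v ht.neg
      rw [mul_comm] at this; exact this
    have hA : HasDerivAt (fun v : ℝ => v * (1 + Real.exp (-((v - x) / δ)))⁻¹)
        ((1 + Real.exp (-((v - x) / δ)))⁻¹ +
          v * (δ⁻¹ * Real.exp (-((v - x) / δ)) / (1 + Real.exp (-((v - x) / δ))) ^ 2)) v := by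
      have hinv : HasDerivAt (fun v : ℝ => (1 + Real.exp (-((v - x) / δ)))⁻¹)
          (-(-δ⁻¹ * Real.exp (-((v - x) / δ))) / (1 + Real.exp (-((v - x) / δ))) ^ 2) v :=
        (hexp.const_add 1).inv (hpos _).ne'
      have h := (hasDerivAt_id v).mul hinv
      refine h.congr_deriv ?_
      have h3 := hpos (-((v - x) / δ))
      field_simp
      simp only [id_eq]; ring
    have hB : HasDerivAt (fun v : ℝ => δ * Real.log (1 + Real.exp ((v - x) / δ)))
        ((1 + Real.exp (-((v - x) / δ)))⁻¹) v := by
      have hexp2 : HasDerivAt (fun v : ℝ => Real.exp ((v - x) / δ))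
          (δ⁻¹ * Real.exp ((v - x) / δ)) v := by
        have := (Real.hasDerivAt_exp ((v - x) / δ)).comp v ht
        rw [mul_comm] at this; exact this
      have hlogd : HasDerivAt (fun v : ℝ => Real.log (1 + Real.exp ((v - x) / δ)))
          ((δ⁻¹ * Real.exp ((v - x) / δ)) / (1 + Real.exp ((v - x) / δ))) v :=
        (hexp2.const_add 1).log (hpos _).ne'
      have h := hlogd.const_mul δ
      refine h.congr_deriv ?_
      have h2 := hpos ((v - x) / δ)
      have h3 := hpos (-((v - x) / δ))
      have hstep : δ * (δ⁻¹ * Real.exp ((v - x) / δ) / (1 + Real.exp ((v - x) / δ)))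
          = Real.exp ((v - x) / δ) / (1 + Real.exp ((v - x) / δ)) := by
        field_simp
      rw [hstep, inv_eq_one_div, div_eq_div_iff h2.ne' h3.ne', mul_add, mul_one,
        ← Real.exp_add, add_neg_cancel, Real.exp_zero, one_mul, add_comm]
    have h := hA.sub hB
    refine h.congr_deriv ?_
    rw [hf]
    simp only
    rw [max_eq_left hv]
    ring
  -- Step 3: nonnegativity of f on (0, ∞)
  have hnonneg : ∀ v ∈ Ioi (0:ℝ), 0 ≤ f v := by
    intro v hv
    have h : (0:ℝ) ≤ max v 0 := le_max_right _ _
    positivity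
  -- Step 4: limit of F at infinity
  have hlim : Tendsto F atTop (𝓝 x) := by
    have htend : Tendsto (fun v : ℝ => Real.exp (-((v - x) / δ))) atTop (𝓝 0) := by
      apply Real.tendsto_exp_atBot.comp
      apply tendsto_neg_atTop_atBot.comp
      apply Filter.Tendsto.atTop_div_const hδ
      exact tendsto_atTop_add_const_right _ _ tendsto_id
    have hmul : Tendsto (fun v : ℝ => v * Real.exp (-((v - x) / δ))) atTop (𝓝 0) := by
      have key : Tendsto (fun v : ℝ => Real.exp (x / δ) * (δ * ((v / δ) * Real.exp (-(v / δ)))))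
          atTop (𝓝 (Real.exp (x / δ) * (δ * 0))) := by
        apply Tendsto.const_mul
        apply Tendsto.const_mul
        have := (Real.tendsto_pow_mul_exp_neg_atTop_nhds_zero 1).comp
          (Filter.Tendsto.atTop_div_const hδ tendsto_id)
        simpa [Function.comp_def] using this
      have heq : (fun v : ℝ => v * Real.exp (-((v - x) / δ))) =
          fun v : ℝ => Real.exp (x / δ) * (δ * ((v / δ) * Real.exp (-(v / δ)))) := by
        funext v
        have he : Real.exp (x / δ) * Real.exp (-(v / δ)) = Real.exp (-((v - x) / δ)) := by
          rw [← Real.exp_add]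
          congr 1
          field_simp
          ring
        rw [← he]
        field_simp
      rw [heq]
      simpa using key
    have hadd : Tendsto (fun v : ℝ => 1 + Real.exp (-((v - x) / δ))) atTop (𝓝 1) := by
      simpa using (tendsto_const_nhds (x := (1:ℝ)) (f := atTop)).add htend
    have hinv : Tendsto (fun v : ℝ => (1 + Real.exp (-((v - x) / δ)))⁻¹) atTop (𝓝 1) := by
      simpa using hadd.inv₀ (by norm_num)
    have hlog' : Tendsto (fun v : ℝ => Real.log (1 + Real.exp (-((v - x) / δ)))) atTop (𝓝 0) := by
      have := (Real.continuousAt_log (x := (1:ℝ)) (by norm_num)).tendsto.comp hadd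
      simpa [Function.comp_def] using this
    have h : Tendsto (fun v : ℝ =>
        x - v * (Real.exp (-((v - x) / δ)) * (1 + Real.exp (-((v - x) / δ)))⁻¹)
          - δ * Real.log (1 + Real.exp (-((v - x) / δ)))) atTop (𝓝 (x - 0 * 1 - δ * 0)) := by
      apply Tendsto.sub
      · apply Tendsto.const_sub
        have := hmul.mul hinv
        simpa [mul_assoc] using this
      · exact hlog'.const_mul δ
    simp only [zero_mul, mul_zero, sub_zero] at h
    exact h.congr fun v => (hF_eq v).symm
  -- Step 5: continuity of F at 0 from the right
  have hcont : ContinuousWithinAt F (Ici (0:ℝ)) 0 :=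
    (hderiv 0 self_mem_Ici).continuousAt.continuousWithinAt
  -- conclude
  have key := integral_Ioi_of_hasDerivAt_of_nonneg hcont
    (fun v hv => hderiv v (Ioi_subset_Ici_self hv)) hnonneg hlim
  rw [h1, key]
  have hF0 : F 0 = -(δ * Real.log (1 + Real.exp (-(x / δ)))) := by
    rw [hF]
    simp only [zero_mul, zero_sub, neg_inj]
    congr 2
    ring
  rw [hF0, hlog (x / δ)]
  field_simp
  ring
end

section
/- MCP proximal operator: for the MCP penalty p_{λ,t} with t > 1/ϑ and ϑ > 0, the minimizer over ζ of (ϑ/2)(u − ζ)² + p_{λ,t}(|ζ|) is ST(u, λ/ϑ)/(1 − 1/(tϑ)) when |u| ≤ tλ, and equals u when |u| > tλ, where ST(x, a) = sign(x)(|x| − a)₊. -/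
open intervalIntegral

noncomputable def mcpPen (lam t : ℝ) (v : ℝ) : ℝ :=
  lam * ∫ x in (0 : ℝ)..v, max (1 - x / (t * lam)) 0

noncomputable def softThresh (x a : ℝ) : ℝ := Real.sign x * max (|x| - a) 0

lemma integral_piece (c v : ℝ) (hc : 0 < c) (hv : 0 ≤ v) (hvc : v ≤ c) :
    ∫ x in (0:ℝ)..v, max (1 - x / c) 0 = v - v^2/(2*c) := by
  have h1 : ∫ x in (0:ℝ)..v, max (1 - x / c) 0 = ∫ x in (0:ℝ)..v, (1 - x / c) := by
    apply intervalIntegral.integral_congr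
    intro x hx
    rw [Set.uIcc_of_le hv] at hx
    have : x / c ≤ 1 := by
      rw [div_le_one hc]; exact hx.2.trans hvc
    exact max_eq_left (by linarith)
  rw [h1, intervalIntegral.integral_sub intervalIntegrable_const
      ((intervalIntegral.intervalIntegrable_id).div_const c)]
  simp [integral_id]
  try field_simp
  try ring

lemma integral_zero_piece (c a b : ℝ) (hc : 0 < c) (hca : c ≤ a) (hab : a ≤ b) :
    ∫ x in a..b, max (1 - x / c) 0 = 0 := by
  have h1 : ∫ x in a..b, max (1 - x / c) 0 = ∫ x in a..b, (0:ℝ) := by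
    apply intervalIntegral.integral_congr
    intro x hx
    rw [Set.uIcc_of_le hab] at hx
    have : 1 ≤ x / c := by
      rw [le_div_iff₀ hc]; nlinarith [hx.1]
    exact max_eq_right (by linarith)
  rw [h1]; simp

lemma mcp_closed (lam t : ℝ) (hlam : 0 < lam) (ht : 0 < t) (v : ℝ) (hv : 0 ≤ v) :
    mcpPen lam t v = if v ≤ t * lam then lam * v - v ^ 2 / (2 * t) else t * lam ^ 2 / 2 := by
  have hc : 0 < t * lam := by positivity
  unfold mcpPen
  split_ifs with h
  · rw [integral_piece _ _ hc hv h]; field_simp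
  · push_neg at h
    have hcont : ∀ a b : ℝ, IntervalIntegrable (fun x => max (1 - x / (t*lam)) 0)
        MeasureTheory.volume a b := by
      intro a b
      exact (Continuous.max (by continuity) continuous_const).intervalIntegrable a b
    rw [← intervalIntegral.integral_add_adjacent_intervals (a := (0:ℝ)) (b := t*lam) (c := v)
        (hcont _ _) (hcont _ _)]
    rw [integral_piece _ _ hc hc.le le_rfl, integral_zero_piece _ _ _ hc le_rfl h.le]
    field_simp
    ring

noncomputable def proxVal (u lam t θ : ℝ) : ℝ :=
  if |u| ≤ t * lam then softThresh u (lam / θ) / (1 - 1 / (t * θ)) else u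

lemma softThresh_neg (x a : ℝ) : softThresh (-x) a = - softThresh x a := by
  unfold softThresh
  rcases lt_trichotomy x 0 with h | h | h
  · rw [Real.sign_of_neg h, Real.sign_of_pos (by linarith), abs_neg]; ring
  · subst h; simp
  · rw [Real.sign_of_pos h, Real.sign_of_neg (by linarith), abs_neg]; ring

lemma proxVal_neg (u lam t θ : ℝ) : proxVal (-u) lam t θ = - proxVal u lam t θ := by
  unfold proxVal
  rw [abs_neg, softThresh_neg]
  split_ifs <;> ring

-- the case |u| ≤ lam/θ (works for any sign of u); here prox value is 0
lemma case_small (u lam t θ : ℝ) (hlam : 0 < lam) (hθ : 0 < θ)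
    (ht1 : 1 < t) (ht : 1 / θ < t) (hu : |u| ≤ lam / θ) :
    ∀ ζ : ℝ, ζ ≠ 0 →
      θ / 2 * (u - 0) ^ 2 + mcpPen lam t |(0:ℝ)| < θ / 2 * (u - ζ) ^ 2 + mcpPen lam t |ζ| := by
  intro ζ hζ
  have ht0 : 0 < t := lt_trans (by positivity) ht
  have htθ : 1 < t * θ := by rw [div_lt_iff₀ hθ] at ht; linarith
  rw [mcp_closed lam t hlam ht0 _ (abs_nonneg ζ), mcp_closed lam t hlam ht0 _ (abs_nonneg 0)]
  have h0 : |(0:ℝ)| ≤ t * lam := by simp; positivity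
  rw [if_pos h0]
  rw [show lam * |(0:ℝ)| - |(0:ℝ)|^2/(2*t) = 0 by simp]
  have h1 : u * ζ ≤ |u| * |ζ| := by rw [← abs_mul]; exact le_abs_self _
  have h2 : θ * |u| ≤ lam := by rw [le_div_iff₀ hθ] at hu; linarith
  have h3 : 0 < ζ^2 := by positivity
  have h4 : |ζ|^2 = ζ^2 := sq_abs ζ
  have h5 : 0 ≤ |ζ| := abs_nonneg ζ
  have h2' : θ * (u * ζ) ≤ lam * |ζ| := by
    calc θ * (u * ζ) ≤ θ * (|u| * |ζ|) := by nlinarith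
      _ ≤ lam * |ζ| := by nlinarith
  split_ifs with h
  · field_simp
    nlinarith [mul_pos h3 (show (0:ℝ) < t*θ - 1 by linarith), mul_le_mul_of_nonneg_left h2' ht0.le]
  · push_neg at h
    have k0 : 0 < (θ*|ζ| - lam)^2 + (t*θ-1)*lam^2 := by
      nlinarith [sq_nonneg (θ*|ζ| - lam), mul_pos (sub_pos.mpr htθ) (pow_pos hlam 2)]
    have k1 : θ*(θ/2*ζ^2 + t*lam^2/2 - lam*|ζ|) = ((θ*|ζ|-lam)^2 + (t*θ-1)*lam^2)/2 := by
      rw [← h4]; ring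
    have k2 : 0 < θ/2*ζ^2 + t*lam^2/2 - lam*|ζ| := by nlinarith [k0, k1]
    have expand : θ / 2 * (u - ζ) ^ 2 = θ/2*u^2 - θ*(u*ζ) + θ/2*ζ^2 := by ring
    rw [expand]
    nlinarith [k2, h2']

lemma mcp_prox_aux (u lam t θ : ℝ) (hlam : 0 < lam) (hθ : 0 < θ)
    (ht1 : 1 < t) (ht : 1 / θ < t) (hu : 0 ≤ u) :
    ∀ ζ : ℝ, ζ ≠ proxVal u lam t θ →
      θ / 2 * (u - proxVal u lam t θ) ^ 2 + mcpPen lam t |proxVal u lam t θ| <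
        θ / 2 * (u - ζ) ^ 2 + mcpPen lam t |ζ| := by
  intro ζ hζ
  have ht0 : 0 < t := lt_trans (by positivity) ht
  have htθ : 1 < t * θ := by rw [div_lt_iff₀ hθ] at ht; linarith
  have habs : |u| = u := abs_of_nonneg hu
  have h2t : (0:ℝ) < 2 * t := by linarith
  by_cases hA : |u| ≤ t * lam
  · by_cases hB : |u| ≤ lam / θ
    · have hz : proxVal u lam t θ = 0 := by
        unfold proxVal softThresh
        rw [if_pos hA, max_eq_right (by linarith), mul_zero, zero_div]
      rw [hz] at hζ ⊢
      exact case_small u lam t θ hlam hθ ht1 ht hB ζ hζ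
    · push_neg at hB
      have hu0 : 0 < u := lt_of_le_of_lt (by positivity) (habs ▸ hB)
      set z := proxVal u lam t θ with hzdef
      have hzval : z = (u - lam / θ) / (1 - 1 / (t * θ)) := by
        rw [hzdef]; unfold proxVal softThresh
        rw [if_pos hA, Real.sign_of_pos hu0, habs,
          max_eq_left (by rw [habs] at hB; linarith), one_mul]
      have hc : 0 < 1 - 1 / (t * θ) := by
        have : 1 / (t * θ) < 1 := by rw [div_lt_one (by positivity)]; exact htθ
        linarith
      have htθ1 : t * θ - 1 ≠ 0 := by intro h'; rw [sub_eq_zero] at h'; exact absurd h'.symm (by linarith)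
      have hzrel : z * (t * θ - 1) = t * (θ * u - lam) := by
        rw [hzval, div_mul_eq_mul_div, div_eq_iff hc.ne']
        field_simp
      have hz0 : 0 < z := by
        rw [hzval]
        apply div_pos _ hc
        rw [habs] at hB
        linarith [(div_lt_iff₀ hθ).mp hB]
      have hutl : u ≤ t * lam := habs ▸ hA
      have hztl : z ≤ t * lam := by nlinarith [hzrel]
      have habz : |z| = z := abs_of_pos hz0
      rw [mcp_closed lam t hlam ht0 _ (abs_nonneg z), mcp_closed lam t hlam ht0 _ (abs_nonneg ζ),
        habz, if_pos hztl]
      have hsq : 0 < (ζ - z) ^ 2 := by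
        have := sub_ne_zero.mpr hζ; positivity
      have hz2 : (ζ - z) * (z * (t * θ - 1) - t * (θ * u - lam)) = 0 := by
        rw [hzrel]; ring
      rw [← sub_pos]
      split_ifs with h
      · -- |ζ| ≤ t * lam
        have hrw : θ / 2 * (u - ζ) ^ 2 + (lam * |ζ| - |ζ| ^ 2 / (2 * t))
            - (θ / 2 * (u - z) ^ 2 + (lam * z - z ^ 2 / (2 * t)))
            = (t * θ * (u - ζ) ^ 2 - t * θ * (u - z) ^ 2 + 2 * t * lam * |ζ| - 2 * t * lam * z
              - ζ ^ 2 + z ^ 2) / (2 * t) := by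
          rw [sq_abs ζ]; field_simp; ring
        rw [hrw]
        apply div_pos _ h2t
        have hP : t * θ * (u - ζ) ^ 2 - t * θ * (u - z) ^ 2 + 2 * t * lam * |ζ| - 2 * t * lam * z
              - ζ ^ 2 + z ^ 2
            = (t * θ - 1) * (ζ - z) ^ 2 + 2 * t * lam * (|ζ| - ζ)
              + 2 * ((ζ - z) * (z * (t * θ - 1) - t * (θ * u - lam))) := by ring
        rw [hP, hz2]
        have p1 : 0 < (t * θ - 1) * (ζ - z) ^ 2 := mul_pos (by linarith) hsq
        have p2 : 0 ≤ 2 * t * lam * (|ζ| - ζ) := by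
          apply mul_nonneg (by positivity)
          linarith [le_abs_self ζ]
        linarith
      · -- |ζ| > t * lam
        push_neg at h
        have hlt : (u - t * lam) ^ 2 < (u - ζ) ^ 2 := by
          rcases lt_abs.mp h with h' | h'
          · nlinarith
          · nlinarith
        have hrw : θ / 2 * (u - ζ) ^ 2 + t * lam ^ 2 / 2
            - (θ / 2 * (u - z) ^ 2 + (lam * z - z ^ 2 / (2 * t)))
            = (t * θ * (u - ζ) ^ 2 + t * (t * lam ^ 2) - t * θ * (u - z) ^ 2 - 2 * t * lam * z
              + z ^ 2) / (2 * t) := by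
          field_simp; ring
        rw [hrw]
        apply div_pos _ h2t
        have hP : t * θ * (u - ζ) ^ 2 + t * (t * lam ^ 2) - t * θ * (u - z) ^ 2 - 2 * t * lam * z
              + z ^ 2
            = (t * θ - 1) * (t * lam - z) ^ 2 + t * θ * ((u - ζ) ^ 2 - (u - t * lam) ^ 2)
              + 2 * ((t * lam - z) * (z * (t * θ - 1) - t * (θ * u - lam))) := by ring
        have hz3 : (t * lam - z) * (z * (t * θ - 1) - t * (θ * u - lam)) = 0 := by
          rw [hzrel]; ring
        rw [hP, hz3]
        have p1 : 0 ≤ (t * θ - 1) * (t * lam - z) ^ 2 :=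
          mul_nonneg (by linarith) (sq_nonneg _)
        have p2 : 0 < t * θ * ((u - ζ) ^ 2 - (u - t * lam) ^ 2) :=
          mul_pos (by positivity) (by linarith)
        linarith
  · -- |u| > t*lam : prox is u itself
    have hz : proxVal u lam t θ = u := by unfold proxVal; rw [if_neg hA]
    push_neg at hA
    rw [hz] at hζ ⊢
    rw [mcp_closed lam t hlam ht0 _ (abs_nonneg u), mcp_closed lam t hlam ht0 _ (abs_nonneg ζ),
      if_neg (not_le.mpr hA)]
    have hsq : 0 < (u - ζ) ^ 2 := by
      have := sub_ne_zero.mpr (Ne.symm hζ); positivity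
    rw [← sub_pos]
    split_ifs with h
    · have w1 : t * lam - |ζ| < |u - ζ| := by
        have := abs_sub_abs_le_abs_sub u ζ
        linarith [habs ▸ hA]
      have w2 : 0 ≤ t * lam - |ζ| := by linarith
      have h6 : (t * lam - |ζ|) ^ 2 < (u - ζ) ^ 2 := by
        rw [← sq_abs (u - ζ)]
        exact pow_lt_pow_left₀ w1 w2 two_ne_zero
      have hrw : θ / 2 * (u - ζ) ^ 2 + (lam * |ζ| - |ζ| ^ 2 / (2 * t))
            - (θ / 2 * (u - u) ^ 2 + t * lam ^ 2 / 2)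
          = (t * θ * (u - ζ) ^ 2 + 2 * t * lam * |ζ| - ζ ^ 2 - t * (t * lam ^ 2)) / (2 * t) := by
        rw [sq_abs ζ]; field_simp; ring
      rw [hrw]
      apply div_pos _ h2t
      have hint : 0 ≤ (t * θ - 1) * (u - ζ) ^ 2 := mul_nonneg (by linarith) (sq_nonneg _)
      have e : (t * lam - |ζ|) ^ 2 = t * (t * lam ^ 2) - 2 * t * lam * |ζ| + ζ ^ 2 := by
        rw [← sq_abs ζ]; ring
      linarith [h6, hint, e]
    · have : θ / 2 * (u - u) ^ 2 = 0 := by ring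
      rw [this]
      have p := mul_pos (half_pos hθ) hsq
      linarith

/-- The MCP proximal operator: closed form of the unique minimizer of the
MCP-penalized quadratic. -/
theorem mcp_prox (u lam t θ : ℝ) (hlam : 0 < lam) (hθ : 0 < θ)
    (ht1 : 1 < t) (ht : 1 / θ < t) :
    ∀ ζ : ℝ,
      ζ ≠ (if |u| ≤ t * lam then softThresh u (lam / θ) / (1 - 1 / (t * θ)) else u) →
      θ / 2 * (u - (if |u| ≤ t * lam then softThresh u (lam / θ) / (1 - 1 / (t * θ)) else u)) ^ 2
          + mcpPen lam t |if |u| ≤ t * lam then softThresh u (lam / θ) / (1 - 1 / (t * θ)) else u| <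
        θ / 2 * (u - ζ) ^ 2 + mcpPen lam t |ζ| := by
  intro ζ hζ
  have hζ' : ζ ≠ proxVal u lam t θ := hζ
  show θ / 2 * (u - proxVal u lam t θ) ^ 2 + mcpPen lam t |proxVal u lam t θ| <
    θ / 2 * (u - ζ) ^ 2 + mcpPen lam t |ζ|
  rcases le_or_gt 0 u with h | h
  · exact mcp_prox_aux u lam t θ hlam hθ ht1 ht h ζ hζ'
  · have h2 := mcp_prox_aux (-u) lam t θ hlam hθ ht1 ht (by linarith) (-ζ)
      (by rw [proxVal_neg]; exact fun e => hζ' (neg_injective e))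
    rw [proxVal_neg, abs_neg, abs_neg] at h2
    have e1 : (-u - -proxVal u lam t θ) ^ 2 = (u - proxVal u lam t θ) ^ 2 := by ring
    have e2 : (-u - -ζ) ^ 2 = (u - ζ) ^ 2 := by ring
    linarith [h2, e1, e2]
end
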